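/- For any symplectic matrix S = [[A,B],[C,D]] ∈ Sp(2n, Z) with integer entries and any integer vector a = (a_X, a_Z) ∈ Z^{2n}, one has (S a)_X^T (S a)_Z ≡ a_X^T a_Z + t̄^T a (mod 2), where t̄ ∈ Z^{2n} is the vector of diagonal entries of the block-diagonal matrix diag(A^T C, B^T D). -/

import Mathlib

/-!
Substituting `AᵀD = 1 + CᵀB`, the product `(Sa)_Xᵀ (Sa)_Z` becomes `a_Xᵀ a_Z` plus the quadratic
forms of the symmetric matrices `AᵀC` and `BᵀD` plus twice the cross term `(C a_X)ᵀ (B a_Z)`.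
Modulo two, the quadratic form of a symmetric matrix only sees its diagonal, and `x² ≡ x`.
-/

open Matrix

theorem Finset.sum_sum_eq_sum_diag_of_charTwo {ι R : Type*} [Semiring R] [CharP R 2]
    (s : Finset ι) (f : ι → ι → R) (hf : ∀ i j, f i j = f j i) :
    ∑ i ∈ s, ∑ j ∈ s, f i j = ∑ i ∈ s, f i i := by
  classical
  -- off the diagonal, `(i, j) ↦ (j, i)` pairs up equal terms, which cancel in characteristic two
  have hoff : ∑ p ∈ s.offDiag, f p.1 p.2 = 0 := by
    refine Finset.sum_involution (fun p _ => p.swap) (fun p _ => ?_) (fun p hp _ => ?_)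
      (fun p hp => ?_) (fun p _ => rfl)
    · rw [Prod.fst_swap, Prod.snd_swap, hf, CharTwo.add_self_eq_zero]
    · exact mt (congrArg Prod.snd) (Finset.mem_offDiag.mp hp).2.2
    · obtain ⟨hi, hj, hij⟩ := Finset.mem_offDiag.mp hp
      exact Finset.mem_offDiag.mpr ⟨hj, hi, Ne.symm hij⟩
  rw [← Finset.sum_product', ← Finset.diag_union_offDiag,
    Finset.sum_union (Finset.disjoint_diag_offDiag s), Finset.sum_diag, hoff, add_zero]

namespace Matrix

variable {ι R : Type*} [Fintype ι]

theorem mulVec_dotProduct_mulVec {m κ : Type*} [Fintype m] [Fintype κ] [CommSemiring R]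
    (M : Matrix m ι R) (N : Matrix m κ R) (x : ι → R) (y : κ → R) :
    M *ᵥ x ⬝ᵥ N *ᵥ y = x ⬝ᵥ (Mᵀ * N) *ᵥ y := by
  rw [dotProduct_mulVec, vecMul_mulVec, ← dotProduct_mulVec]

theorem IsSymm.dotProduct_mulVec_self_of_charTwo [CommSemiring R] [CharP R 2]
    {M : Matrix ι ι R} (hM : M.IsSymm) (x : ι → R) :
    x ⬝ᵥ M *ᵥ x = ∑ i, M i i * x i ^ 2 := by
  simp only [dotProduct, mulVec, Finset.mul_sum]
  rw [Finset.sum_sum_eq_sum_diag_of_charTwo]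
  · exact Finset.sum_congr rfl fun i _ => by ring
  · intro i j
    rw [hM.apply i j]
    ring

theorem IsSymm.dotProduct_mulVec_self_modEq_two {M : Matrix ι ι ℤ} (hM : M.IsSymm)
    (x : ι → ℤ) : x ⬝ᵥ M *ᵥ x ≡ ∑ i, M i i * x i [ZMOD 2] := by
  refine (ZMod.intCast_eq_intCast_iff _ _ 2).mp ?_
  set f := Int.castRingHom (ZMod 2)
  have hcast : f (x ⬝ᵥ M *ᵥ x) = f ∘ x ⬝ᵥ M.map f *ᵥ (f ∘ x) := by
    rw [RingHom.map_dotProduct]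
    congr 1
    exact funext (RingHom.map_mulVec f M x)
  have key := (hM.map f).dotProduct_mulVec_self_of_charTwo (f ∘ x)
  rw [← hcast] at key
  simpa [f, ZMod.pow_card] using key

theorem dotProduct_mulVec_add_mulVec_of_symplectic [CommRing R] [DecidableEq ι]
    {A B C D : Matrix ι ι R} (h : Aᵀ * D - Cᵀ * B = 1) (x z : ι → R) :
    (A *ᵥ x + B *ᵥ z) ⬝ᵥ (C *ᵥ x + D *ᵥ z) =
      x ⬝ᵥ z + x ⬝ᵥ (Aᵀ * C) *ᵥ x + z ⬝ᵥ (Bᵀ * D) *ᵥ z + 2 * (C *ᵥ x ⬝ᵥ B *ᵥ z) := by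
  have hBC : z ⬝ᵥ (Bᵀ * C) *ᵥ x = C *ᵥ x ⬝ᵥ B *ᵥ z := by
    rw [← mulVec_dotProduct_mulVec, dotProduct_comm]
  rw [add_dotProduct, dotProduct_add, dotProduct_add, mulVec_dotProduct_mulVec A C,
    mulVec_dotProduct_mulVec A D, mulVec_dotProduct_mulVec B C, mulVec_dotProduct_mulVec B D,
    eq_add_of_sub_eq h, add_mulVec, one_mulVec, dotProduct_add, ← mulVec_dotProduct_mulVec C B,
    hBC]
  ring

end Matrix

/-- For any integer symplectic matrix `S = [[A,B],[C,D]] ∈ Sp(2n,ℤ)` (equivalently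
`AᵀC`, `BᵀD` symmetric and `AᵀD − CᵀB = I`) and any integer vector `a = (a_X, a_Z) ∈ ℤ^{2n}`,
`(Sa)_Xᵀ (Sa)_Z ≡ a_Xᵀ a_Z + t̄ᵀ a (mod 2)` where `t̄` consists of the diagonal entries of
`diag(AᵀC, BᵀD)`. -/
theorem symplectic_phase_mod_two (n : ℕ)
    (A B C D : Matrix (Fin n) (Fin n) ℤ)
    (hAC : (Aᵀ * C)ᵀ = Aᵀ * C) (hBD : (Bᵀ * D)ᵀ = Bᵀ * D)
    (hABCD : Aᵀ * D - Cᵀ * B = 1)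
    (aX aZ : Fin n → ℤ) :
    (A.mulVec aX + B.mulVec aZ) ⬝ᵥ (C.mulVec aX + D.mulVec aZ) ≡
      aX ⬝ᵥ aZ + ((∑ i, (Aᵀ * C) i i * aX i) + ∑ i, (Bᵀ * D) i i * aZ i) [ZMOD 2] := by
  have hcross : 2 * (C *ᵥ aX ⬝ᵥ B *ᵥ aZ) ≡ 0 [ZMOD 2] :=
    Int.modEq_zero_iff_dvd.mpr (dvd_mul_right _ _)
  rw [dotProduct_mulVec_add_mulVec_of_symplectic hABCD]
  calc _ ≡ aX ⬝ᵥ aZ + ∑ i, (Aᵀ * C) i i * aX i + ∑ i, (Bᵀ * D) i i * aZ i + 0 [ZMOD 2] :=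
        (((Int.ModEq.refl _).add (IsSymm.dotProduct_mulVec_self_modEq_two hAC aX)).add
          (IsSymm.dotProduct_mulVec_self_modEq_two hBD aZ)).add hcross
    _ = _ := by ring
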